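/- Let q be an odd prime power ≥ 3 and p' an odd prime. Then there exists an odd prime ℓ dividing the order of PSL(2, F_{q^{p'}}) that divides neither the order of PSL(2, F_q) nor the order q^2(q^2-1)/2 of the Borel subgroup of PSL(2, F_{q^2}). -/

import Mathlib

/-!
Put `r₋ = (q^p' - 1)/(q - 1) = ∑ qⁱ` and `r₊ = (q^p' + 1)/(q + 1) = ∑ (-q)ⁱ`, sums over `i < p'`.
Both are odd and at least `2`, and a common divisor of them divides `2`, so the odd prime `p'`
fails to divide one of them; call it `r`. Any prime `ℓ ∣ r` is odd, divides `q^(2p') - 1` and is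
prime to `q`. Modulo `ℓ`, `q ≡ ±1` would make `r` congruent to `p'` or to `1`, both impossible;
hence `ℓ ∤ q² - 1`, and `ℓ` divides neither `|PSL(2, q)|` nor the order of the Borel subgroup of
`PSL(2, q²)`.
-/

open Finset

section GeomSum

variable {R : Type*} [CommRing R] {m x : R} {n : ℕ}

theorem dvd_geom_sum_iff_of_dvd_sub_one (h : m ∣ x - 1) :
    m ∣ ∑ i ∈ range n, x ^ i ↔ m ∣ (n : R) := by
  simpa [geom_sum₂_with_one] using dvd_geom_sum₂_iff_of_dvd_sub (n := n) h

theorem dvd_geom_sum_iff_of_dvd_add_one (hn : Odd n) (h : m ∣ x + 1) :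
    m ∣ ∑ i ∈ range n, x ^ i ↔ m ∣ 1 := by
  rw [← sub_neg_eq_add, ← Ideal.mem_span_singleton, ← Ideal.Quotient.eq] at h
  simp only [← Ideal.mem_span_singleton, ← Ideal.Quotient.eq_zero_iff_mem, RingHom.map_geom_sum,
    h, map_neg, map_one, neg_one_geom_sum, if_neg (Nat.not_even_iff_odd.2 hn)]

theorem dvd_two_of_dvd_geom_sum_of_dvd_geom_sum_neg (hn : Odd n)
    (hx : m ∣ ∑ i ∈ range n, x ^ i) (hnegx : m ∣ ∑ i ∈ range n, (-x) ^ i) : m ∣ 2 := by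
  have h := dvd_add (hx.mul_right (x - 1)) (hnegx.mul_right (-x - 1))
  rw [geom_sum_mul, geom_sum_mul, hn.neg_pow] at h
  rwa [show x ^ n - 1 + (-x ^ n - 1) = -2 by ring, dvd_neg] at h

end GeomSum

section Int

variable {x : ℤ} {n : ℕ}

theorem odd_geom_sum (hx : Odd x) (hn : Odd n) : Odd (∑ i ∈ range n, x ^ i) := by
  have h2 : (2 : ℤ) ∣ x - 1 := (hx.sub_odd odd_one).two_dvd
  rw [← Int.not_even_iff_odd, even_iff_two_dvd, dvd_geom_sum_iff_of_dvd_sub_one h2]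
  exact_mod_cast (Nat.not_even_iff_odd.2 hn ∘ even_iff_two_dvd.2)

theorem two_le_abs_geom_sum (hx : 3 ≤ |x|) (hn : 2 ≤ n) : 2 ≤ |∑ i ∈ range n, x ^ i| := by
  have hmul : |∑ i ∈ range n, x ^ i| * |x - 1| = |x ^ n - 1| := by
    rw [← abs_mul, geom_sum_mul]
  have h1 : |x - 1| ≤ |x| + 1 := by simpa using abs_sub x 1
  have h2 : |x| ^ n - 1 ≤ |x ^ n - 1| := by
    simpa [abs_pow] using abs_sub_abs_le_abs_sub (x ^ n) 1
  have h3 : |x| ^ 2 ≤ |x| ^ n := pow_le_pow_right₀ (by linarith) hn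
  by_contra! hS
  nlinarith [abs_nonneg (x - 1), abs_nonneg (∑ i ∈ range n, x ^ i)]

theorem exists_odd_prime_dvd_pow_sub_one_not_dvd_sq_sub_one (hx : Odd x) (hx3 : 3 ≤ |x|)
    (hn : n.Prime) (hn_odd : Odd n) (hS : ¬ (n : ℤ) ∣ ∑ i ∈ range n, x ^ i) :
    ∃ ℓ : ℕ, ℓ.Prime ∧ Odd ℓ ∧ (ℓ : ℤ) ∣ x ^ n - 1 ∧ ¬ (ℓ : ℤ) ∣ x ∧ ¬ (ℓ : ℤ) ∣ x ^ 2 - 1 := by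
  set S := ∑ i ∈ range n, x ^ i
  have hS_natAbs : S.natAbs ≠ 1 := by
    have := two_le_abs_geom_sum hx3 hn.two_le
    rw [Int.abs_eq_natAbs] at this
    omega
  obtain ⟨ℓ, hℓ, hℓS⟩ := Nat.exists_prime_and_dvd hS_natAbs
  have hℓ_odd : Odd ℓ := (Int.natAbs_odd.2 (odd_geom_sum hx hn_odd)).of_dvd_nat hℓS
  have hℓ' : Prime (ℓ : ℤ) := Nat.prime_iff_prime_int.1 hℓ
  replace hℓS : (ℓ : ℤ) ∣ S := Int.natCast_dvd.2 hℓS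
  have hℓ_pow : (ℓ : ℤ) ∣ x ^ n - 1 := hℓS.trans (Dvd.intro _ (geom_sum_mul x n))
  refine ⟨ℓ, hℓ, hℓ_odd, hℓ_pow, fun hℓx => ?_, fun hℓx => ?_⟩
  · have := dvd_sub (dvd_pow hℓx hn.ne_zero) hℓ_pow
    exact hℓ'.not_dvd_one (by simpa using this)
  · rw [sq, mul_self_sub_one] at hℓx
    rcases hℓ'.dvd_or_dvd hℓx with hℓx | hℓx
    · exact hℓ'.not_dvd_one ((dvd_geom_sum_iff_of_dvd_add_one hn_odd hℓx).1 hℓS)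
    · have hℓn : ℓ ∣ n := by exact_mod_cast (dvd_geom_sum_iff_of_dvd_sub_one hℓx).1 hℓS
      rw [(Nat.prime_dvd_prime_iff_eq hℓ hn).1 hℓn] at hℓS
      exact hS hℓS

theorem exists_abs_eq_not_dvd_geom_sum (q : ℤ) {p : ℕ} (hp : p.Prime) (hp_odd : Odd p) :
    ∃ x : ℤ, |x| = |q| ∧ ¬ (p : ℤ) ∣ ∑ i ∈ range p, x ^ i := by
  have hp3 : 3 ≤ p := by
    have := hp.two_le
    have := Nat.odd_iff.1 hp_odd
    omega
  by_contra! h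
  have := Int.le_of_dvd two_pos <|
    dvd_two_of_dvd_geom_sum_of_dvd_geom_sum_neg hp_odd (h q rfl) (h (-q) (abs_neg q))
  omega

end Int

theorem Nat.exists_odd_prime_dvd_sq_pow_sub_one_not_dvd_sq_sub_one {q p : ℕ} (hodd : Odd q)
    (hq : 3 ≤ q) (hp : p.Prime) (hp_odd : Odd p) :
    ∃ ℓ : ℕ, ℓ.Prime ∧ Odd ℓ ∧ ℓ ∣ (q ^ p) ^ 2 - 1 ∧ ¬ ℓ ∣ q ∧ ¬ ℓ ∣ q ^ 2 - 1 := by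
  obtain ⟨x, hx_abs, hS⟩ := exists_abs_eq_not_dvd_geom_sum q hp hp_odd
  rw [Nat.abs_cast] at hx_abs
  obtain ⟨ℓ, hℓ, hℓ_odd, hℓ_pow, hℓ_x, hℓ_sq⟩ :=
    exists_odd_prime_dvd_pow_sub_one_not_dvd_sq_sub_one
      (by rwa [← odd_abs, hx_abs, Int.odd_coe_nat]) (by omega) hp hp_odd hS
  refine ⟨ℓ, hℓ, hℓ_odd, ?_, ?_, ?_⟩
  · zify [Nat.one_le_pow 2 (q ^ p) (by positivity)]
    rw [← hx_abs, ← abs_pow, sq_abs]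
    exact hℓ_pow.trans (Dvd.intro (x ^ p + 1) (by ring))
  · zify
    rwa [← hx_abs, dvd_abs]
  · zify [Nat.one_le_pow 2 q (by omega)]
    rwa [← hx_abs, sq_abs]

theorem Nat.dvd_div_two_iff_of_odd {ℓ a : ℕ} (hℓ : Odd ℓ) (ha : Even a) :
    ℓ ∣ a / 2 ↔ ℓ ∣ a := by
  rw [Nat.dvd_div_iff_mul_dvd ha.two_dvd]
  exact ⟨(dvd_mul_left ℓ 2).trans, (Nat.coprime_two_left.2 hℓ).mul_dvd_of_dvd_of_dvd ha.two_dvd⟩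

theorem stmt13_general (q p' : ℕ) (hodd : Odd q) (hq : 3 ≤ q)
    (hp' : p'.Prime) (hp'odd : Odd p') :
    ∃ ℓ : ℕ, ℓ.Prime ∧ Odd ℓ ∧
      ℓ ∣ q ^ p' * ((q ^ p') ^ 2 - 1) / 2 ∧
      ¬ ℓ ∣ q * (q ^ 2 - 1) / 2 ∧
      ¬ ℓ ∣ q ^ 2 * (q ^ 2 - 1) / 2 := by
  obtain ⟨ℓ, hℓ, hℓ_odd, hℓ_pow, hℓ_q, hℓ_sq⟩ :=
    Nat.exists_odd_prime_dvd_sq_pow_sub_one_not_dvd_sq_sub_one hodd hq hp' hp'odd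
  have hℓ_mul (k : ℕ) : ¬ ℓ ∣ q ^ k * (q ^ 2 - 1) := by
    rw [hℓ.dvd_mul]
    exact not_or.2 ⟨mt hℓ.dvd_of_dvd_pow hℓ_q, hℓ_sq⟩
  have h_even (a : ℕ) {b : ℕ} (hb : Odd b) : Even (a * (b - 1)) :=
    (Nat.Odd.sub_odd hb odd_one).mul_left a
  refine ⟨ℓ, hℓ, hℓ_odd, ?_, ?_, ?_⟩
  · rw [Nat.dvd_div_two_iff_of_odd hℓ_odd (h_even _ hodd.pow.pow)]
    exact hℓ_pow.mul_left _
  · rw [Nat.dvd_div_two_iff_of_odd hℓ_odd (h_even _ hodd.pow)]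
    simpa using hℓ_mul 1
  · rw [Nat.dvd_div_two_iff_of_odd hℓ_odd (h_even _ hodd.pow)]
    exact hℓ_mul 2

theorem stmt13 (q p' : ℕ) (hpp : IsPrimePow q) (hodd : Odd q) (hq : 3 ≤ q)
    (hp' : p'.Prime) (hp'odd : Odd p') :
    ∃ ℓ : ℕ, ℓ.Prime ∧ Odd ℓ ∧
      ℓ ∣ q ^ p' * ((q ^ p') ^ 2 - 1) / 2 ∧
      ¬ ℓ ∣ q * (q ^ 2 - 1) / 2 ∧
      ¬ ℓ ∣ q ^ 2 * (q ^ 2 - 1) / 2 :=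
  stmt13_general q p' hodd hq hp' hp'odd
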